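/- For any two density matrices ρ, σ (positive semidefinite complex N×N matrices with trace 1), the superfidelity G(ρ,σ) = tr(ρσ) + √(1 - tr(ρ²))·√(1 - tr(σ²)) satisfies 0 ≤ G(ρ,σ) ≤ 1. -/

import Mathlib

open Matrix ComplexOrder

noncomputable def sG {N : ℕ} (ρ σ : Matrix (Fin N) (Fin N) ℂ) : ℝ :=
  (trace (ρ * σ)).re +
    Real.sqrt (1 - (trace (ρ * ρ)).re) * Real.sqrt (1 - (trace (σ * σ)).re)

/-!
For density matrices `tr ρ² = ∑ λᵢ² ≤ (∑ λᵢ)² = 1`, so both square roots are real. Lower bound: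
`tr (ρσ) = tr (√ρ σ √ρ) ≥ 0`. Upper bound: `tr ((ρ - σ)²) ≥ 0` gives
`tr (ρσ) ≤ (tr ρ² + tr σ²) / 2`, and AM-GM bounds the product of the square roots by
`(2 - tr ρ² - tr σ²) / 2`; the two halves add up to `1`.
-/

namespace Matrix

variable {n 𝕜 : Type*} [Fintype n] [DecidableEq n] [RCLike 𝕜] {A B : Matrix n n 𝕜}

lemma IsHermitian.trace_cfc (hA : A.IsHermitian) (f : ℝ → ℝ) :
    (cfc f A).trace = ∑ i, (f (hA.eigenvalues i) : 𝕜) := by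
  rw [hA.cfc_eq, IsHermitian.cfc, Unitary.conjStarAlgAut_apply, trace_mul_cycle,
    Unitary.coe_star_mul_self, one_mul, trace_diagonal]
  rfl

lemma IsHermitian.re_trace_mul_self (hA : A.IsHermitian) :
    RCLike.re (A * A).trace = ∑ i, hA.eigenvalues i ^ 2 := by
  rw [← sq, ← cfc_pow_id (R := ℝ) A 2 hA.isSelfAdjoint, hA.trace_cfc, ← RCLike.ofReal_sum,
    RCLike.ofReal_re]

lemma IsHermitian.re_trace (hA : A.IsHermitian) :
    RCLike.re A.trace = ∑ i, hA.eigenvalues i := by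
  rw [hA.trace_eq_sum_eigenvalues, ← RCLike.ofReal_sum, RCLike.ofReal_re]

lemma PosSemidef.re_trace_mul_self_le_sq (hA : A.PosSemidef) :
    RCLike.re (A * A).trace ≤ RCLike.re A.trace ^ 2 := by
  rw [hA.isHermitian.re_trace_mul_self, hA.isHermitian.re_trace]
  exact Finset.sum_sq_le_sq_sum_of_nonneg fun i _ ↦ hA.eigenvalues_nonneg i

lemma PosSemidef.re_trace_mul_self_le_one (hA : A.PosSemidef) (h1 : A.trace = 1) :
    RCLike.re (A * A).trace ≤ 1 := by
  simpa [h1] using hA.re_trace_mul_self_le_sq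

lemma IsHermitian.re_trace_mul_self_nonneg (hA : A.IsHermitian) :
    0 ≤ RCLike.re (A * A).trace := by
  rw [hA.re_trace_mul_self]
  positivity

open scoped MatrixOrder in
lemma PosSemidef.trace_mul_nonneg (hA : A.PosSemidef) (hB : B.PosSemidef) :
    0 ≤ (A * B).trace := by
  have hS : (CFC.sqrt A).IsHermitian := (CFC.sqrt_nonneg A).posSemidef.isHermitian
  have hSBS : (CFC.sqrt A * B * CFC.sqrt A).PosSemidef := by
    simpa [hS.eq] using hB.conjTranspose_mul_mul_same (CFC.sqrt A)
  calc (0 : 𝕜) ≤ (CFC.sqrt A * B * CFC.sqrt A).trace := hSBS.trace_nonneg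
    _ = (CFC.sqrt A * CFC.sqrt A * B).trace := by rw [trace_mul_comm, mul_assoc]
    _ = (A * B).trace := by rw [CFC.sqrt_mul_sqrt_self A hA.nonneg]

lemma IsHermitian.two_mul_re_trace_mul_le (hA : A.IsHermitian) (hB : B.IsHermitian) :
    2 * RCLike.re (A * B).trace ≤ RCLike.re (A * A).trace + RCLike.re (B * B).trace := by
  have h := (hA.sub hB).re_trace_mul_self_nonneg
  rw [sub_mul, mul_sub, mul_sub, trace_sub, trace_sub, trace_sub, trace_mul_comm B A] at h
  simp only [map_sub] at h
  linarith

end Matrix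

lemma add_sqrt_mul_sqrt_le_one {t a b : ℝ} (ha : a ≤ 1) (hb : b ≤ 1) (h : 2 * t ≤ a + b) :
    t + √(1 - a) * √(1 - b) ≤ 1 := by
  have hamgm := two_mul_le_add_sq (√(1 - a)) (√(1 - b))
  rw [Real.sq_sqrt (by linarith), Real.sq_sqrt (by linarith)] at hamgm
  linarith

theorem superfidelity_bounds {N : ℕ} (ρ σ : Matrix (Fin N) (Fin N) ℂ)
    (hρ : ρ.PosSemidef) (hσ : σ.PosSemidef)
    (hρ1 : trace ρ = 1) (hσ1 : trace σ = 1) :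
    0 ≤ sG ρ σ ∧ sG ρ σ ≤ 1 := by
  have hρρ : (trace (ρ * ρ)).re ≤ 1 := hρ.re_trace_mul_self_le_one hρ1
  have hσσ : (trace (σ * σ)).re ≤ 1 := hσ.re_trace_mul_self_le_one hσ1
  constructor
  · have hρσ := (Complex.nonneg_iff.mp (hρ.trace_mul_nonneg hσ)).1
    unfold sG
    positivity
  · exact add_sqrt_mul_sqrt_le_one hρρ hσσ (hρ.isHermitian.two_mul_re_trace_mul_le hσ.isHermitian)
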